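/- arXiv:1607.08735 — 3 statements merged into one kernel-verified Lean document; each statement's English description precedes it below -/
import Mathlib

section
/- The logarithmic mean Λ(a,b) = ∫₀¹ a^s b^{1−s} ds is jointly concave as a function of (a,b) on (0,∞)². -/
noncomputable def logMeanInt (a b : ℝ) : ℝ :=
  ∫ s in (0:ℝ)..1, a ^ s * b ^ (1 - s)

private lemma rpow_mul_rpow_self {θ : ℝ} (hθ : 0 ≤ θ) {s : ℝ} (hs0 : 0 ≤ s) (_hs1 : s ≤ 1) :
    θ ^ s * θ ^ (1 - s) = θ := by
  rcases eq_or_lt_of_le hθ with h | h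
  · rcases eq_or_lt_of_le hs0 with h0 | h0
    · simp [← h, ← h0]
    · rw [← h, Real.zero_rpow h0.ne', zero_mul]
  · rw [← Real.rpow_add h, add_sub_cancel, Real.rpow_one]

private lemma holder_two {x₁ y₁ x₂ y₂ s : ℝ} (hx₁ : 0 ≤ x₁) (hy₁ : 0 ≤ y₁)
    (hx₂ : 0 ≤ x₂) (hy₂ : 0 ≤ y₂) (hX : 0 < x₁ + x₂) (hY : 0 < y₁ + y₂)
    (hs0 : 0 ≤ s) (hs1 : s ≤ 1) :
    x₁ ^ s * y₁ ^ (1 - s) + x₂ ^ s * y₂ ^ (1 - s) ≤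
      (x₁ + x₂) ^ s * (y₁ + y₂) ^ (1 - s) := by
  set X := x₁ + x₂
  set Y := y₁ + y₂
  have hXY : 0 < X ^ s * Y ^ (1 - s) :=
    mul_pos (Real.rpow_pos_of_pos hX _) (Real.rpow_pos_of_pos hY _)
  have key : ∀ x y : ℝ, 0 ≤ x → 0 ≤ y →
      x ^ s * y ^ (1 - s) ≤ X ^ s * Y ^ (1 - s) * (s * (x / X) + (1 - s) * (y / Y)) := by
    intro x y hx hy
    have h1 : x ^ s * y ^ (1 - s) = X ^ s * Y ^ (1 - s) * ((x / X) ^ s * (y / Y) ^ (1 - s)) := by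
      rw [Real.div_rpow hx hX.le, Real.div_rpow hy hY.le]
      field_simp
    rw [h1]
    refine mul_le_mul_of_nonneg_left ?_ hXY.le
    exact Real.geom_mean_le_arith_mean2_weighted hs0 (by linarith)
      (div_nonneg hx hX.le) (div_nonneg hy hY.le) (by ring)
  calc x₁ ^ s * y₁ ^ (1 - s) + x₂ ^ s * y₂ ^ (1 - s)
      ≤ X ^ s * Y ^ (1 - s) * (s * (x₁ / X) + (1 - s) * (y₁ / Y)) +
        X ^ s * Y ^ (1 - s) * (s * (x₂ / X) + (1 - s) * (y₂ / Y)) :=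
        add_le_add (key _ _ hx₁ hy₁) (key _ _ hx₂ hy₂)
    _ = X ^ s * Y ^ (1 - s) * (s * ((x₁ + x₂) / X) + (1 - s) * ((y₁ + y₂) / Y)) := by ring
    _ = X ^ s * Y ^ (1 - s) := by
        rw [div_self hX.ne', div_self hY.ne']; ring

private lemma cont_rpow {a b : ℝ} (ha : 0 < a) (hb : 0 < b) :
    Continuous (fun s : ℝ => a ^ s * b ^ (1 - s)) := by
  have h1 : Continuous fun s : ℝ => a ^ s :=
    continuous_const.rpow continuous_id fun x => Or.inl ha.ne'
  have h2 : Continuous fun s : ℝ => b ^ (1 - s) :=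
    continuous_const.rpow (continuous_const.sub continuous_id) fun x => Or.inl hb.ne'
  exact h1.mul h2

private lemma convex_combo_pos {θ a b : ℝ} (hθ₀ : 0 ≤ θ) (hθ₁ : θ ≤ 1)
    (ha : 0 < a) (hb : 0 < b) : 0 < θ * a + (1 - θ) * b := by
  rcases eq_or_lt_of_le hθ₁ with h | h
  · rw [h]; simpa using ha
  · have h1 : 0 ≤ θ * a := mul_nonneg hθ₀ ha.le
    have h2 : 0 < (1 - θ) * b := mul_pos (by linarith) hb
    linarith

theorem logMean_concave (a₁ b₁ a₂ b₂ θ : ℝ) (ha₁ : 0 < a₁) (hb₁ : 0 < b₁)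
    (ha₂ : 0 < a₂) (hb₂ : 0 < b₂) (hθ₀ : 0 ≤ θ) (hθ₁ : θ ≤ 1) :
    θ * logMeanInt a₁ b₁ + (1 - θ) * logMeanInt a₂ b₂ ≤
      logMeanInt (θ * a₁ + (1 - θ) * a₂) (θ * b₁ + (1 - θ) * b₂) := by
  have hθ' : 0 ≤ 1 - θ := by linarith
  have hA : 0 < θ * a₁ + (1 - θ) * a₂ := convex_combo_pos hθ₀ hθ₁ ha₁ ha₂
  have hB : 0 < θ * b₁ + (1 - θ) * b₂ := convex_combo_pos hθ₀ hθ₁ hb₁ hb₂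
  have hc1 := cont_rpow ha₁ hb₁
  have hc2 := cont_rpow ha₂ hb₂
  have hc3 := cont_rpow hA hB
  have hint1 : IntervalIntegrable (fun s : ℝ => θ * (a₁ ^ s * b₁ ^ (1 - s))) MeasureTheory.volume 0 1 :=
    ((continuous_const.mul hc1)).intervalIntegrable 0 1
  have hint2 : IntervalIntegrable (fun s : ℝ => (1 - θ) * (a₂ ^ s * b₂ ^ (1 - s))) MeasureTheory.volume 0 1 :=
    ((continuous_const.mul hc2)).intervalIntegrable 0 1
  have hmono : ∀ s ∈ Set.Icc (0:ℝ) 1,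
      θ * (a₁ ^ s * b₁ ^ (1 - s)) + (1 - θ) * (a₂ ^ s * b₂ ^ (1 - s)) ≤
        (θ * a₁ + (1 - θ) * a₂) ^ s * (θ * b₁ + (1 - θ) * b₂) ^ (1 - s) := by
    intro s hs
    obtain ⟨hs0, hs1⟩ := hs
    have e1 : θ * (a₁ ^ s * b₁ ^ (1 - s)) = (θ * a₁) ^ s * (θ * b₁) ^ (1 - s) := by
      rw [Real.mul_rpow hθ₀ ha₁.le, Real.mul_rpow hθ₀ hb₁.le,
        show θ ^ s * a₁ ^ s * (θ ^ (1 - s) * b₁ ^ (1 - s)) =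
          θ ^ s * θ ^ (1 - s) * (a₁ ^ s * b₁ ^ (1 - s)) by ring,
        rpow_mul_rpow_self hθ₀ hs0 hs1]
    have e2 : (1 - θ) * (a₂ ^ s * b₂ ^ (1 - s)) = ((1 - θ) * a₂) ^ s * ((1 - θ) * b₂) ^ (1 - s) := by
      rw [Real.mul_rpow hθ' ha₂.le, Real.mul_rpow hθ' hb₂.le,
        show (1 - θ) ^ s * a₂ ^ s * ((1 - θ) ^ (1 - s) * b₂ ^ (1 - s)) =
          (1 - θ) ^ s * (1 - θ) ^ (1 - s) * (a₂ ^ s * b₂ ^ (1 - s)) by ring,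
        rpow_mul_rpow_self hθ' hs0 hs1]
    rw [e1, e2]
    exact holder_two (by positivity) (by positivity) (by positivity) (by positivity)
      hA hB hs0 hs1
  have hmono' : (∫ s in (0:ℝ)..1, (θ * (a₁ ^ s * b₁ ^ (1 - s)) + (1 - θ) * (a₂ ^ s * b₂ ^ (1 - s)))) ≤
      ∫ s in (0:ℝ)..1, (θ * a₁ + (1 - θ) * a₂) ^ s * (θ * b₁ + (1 - θ) * b₂) ^ (1 - s) :=
    intervalIntegral.integral_mono_on (by norm_num) (hint1.add hint2)
      (hc3.intervalIntegrable 0 1) hmono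
  unfold logMeanInt
  rw [← intervalIntegral.integral_const_mul, ← intervalIntegral.integral_const_mul,
    ← intervalIntegral.integral_add hint1 hint2]
  exact hmono'
end

section
/- Let α, β : I → (0,∞) be summable functions on a countable index set I with sums A = ∑ α_i and B = ∑ β_i. Then ∑_{i∈I} (α_i − β_i) log(α_i/β_i) ≥ (B − A) log(B/A), with the convention that the right side is 0 when A = B. -/
open Real Filter Topology

private lemma logsum_aux {a b S : ℝ} (ha : 0 < a) (hb : 0 < b) (hS : 0 < S) :
    a * Real.log S + a - b * S ≤ a * Real.log (a / b) := by
  have h := Real.one_sub_inv_le_log_of_pos (show 0 < a / (b * S) by positivity)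
  have hlog : Real.log (a / (b * S)) = Real.log (a / b) - Real.log S := by
    rw [Real.log_div ha.ne' (by positivity), Real.log_mul hb.ne' hS.ne',
      Real.log_div ha.ne' hb.ne']
    ring
  have hinv : (a / (b * S))⁻¹ = b * S / a := by
    field_simp
  rw [hlog, hinv] at h
  have := mul_le_mul_of_nonneg_left h ha.le
  have ha' : a * (b * S / a) = b * S := by field_simp
  nlinarith [this]

private lemma logsum {a b c d : ℝ} (ha : 0 < a) (hb : 0 < b) (hc : 0 < c) (hd : 0 < d) :
    (a + c) * Real.log ((a + c) / (b + d)) ≤ a * Real.log (a / b) + c * Real.log (c / d) := by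
  have hS : 0 < (a + c) / (b + d) := by positivity
  have h1 := logsum_aux ha hb hS
  have h2 := logsum_aux hc hd hS
  have key : b * ((a + c) / (b + d)) + d * ((a + c) / (b + d)) = a + c := by
    field_simp
  nlinarith [h1, h2]

private lemma f_eq {a b : ℝ} (ha : 0 < a) (hb : 0 < b) :
    (a - b) * Real.log (a / b) = a * Real.log (a / b) + b * Real.log (b / a) := by
  rw [show Real.log (b / a) = - Real.log (a / b) by
    rw [Real.log_div hb.ne' ha.ne', Real.log_div ha.ne' hb.ne']; ring]
  ring

private lemma f_nonneg {a b : ℝ} (ha : 0 < a) (hb : 0 < b) :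
    0 ≤ (a - b) * Real.log (a / b) := by
  rcases le_total b a with h | h
  · exact mul_nonneg (by linarith) (Real.log_nonneg ((le_div_iff₀ hb).2 (by linarith)))
  · exact mul_nonneg_of_nonpos_of_nonpos (by linarith)
      (Real.log_nonpos (by positivity) ((div_le_one hb).2 h))

private lemma f_subadd {a b c d : ℝ} (ha : 0 < a) (hb : 0 < b) (hc : 0 < c) (hd : 0 < d) :
    (a + c - (b + d)) * Real.log ((a + c) / (b + d)) ≤
      (a - b) * Real.log (a / b) + (c - d) * Real.log (c / d) := by
  rw [f_eq ha hb, f_eq hc hd, f_eq (by positivity : (0:ℝ) < a + c) (by positivity : (0:ℝ) < b + d)]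
  have h1 := logsum ha hb hc hd
  have h2 := logsum hb ha hd hc
  linarith

private lemma finset_key {I : Type*} (α β : I → ℝ) (hα : ∀ i, 0 < α i) (hβ : ∀ i, 0 < β i)
    (s : Finset I) :
    (∑ i ∈ s, α i - ∑ i ∈ s, β i) * Real.log ((∑ i ∈ s, α i) / (∑ i ∈ s, β i)) ≤
      ∑ i ∈ s, (α i - β i) * Real.log (α i / β i) := by
  classical
  induction s using Finset.induction_on with
  | empty => simp
  | @insert i s hx ih =>
    rcases s.eq_empty_or_nonempty with rfl | hs
    · simp
    · have hsa : 0 < ∑ j ∈ s, α j := Finset.sum_pos (fun j _ => hα j) hs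
      have hsb : 0 < ∑ j ∈ s, β j := Finset.sum_pos (fun j _ => hβ j) hs
      rw [Finset.sum_insert hx, Finset.sum_insert hx, Finset.sum_insert hx]
      calc (α i + ∑ j ∈ s, α j - (β i + ∑ j ∈ s, β j)) *
            Real.log ((α i + ∑ j ∈ s, α j) / (β i + ∑ j ∈ s, β j))
          ≤ (α i - β i) * Real.log (α i / β i) +
            (∑ j ∈ s, α j - ∑ j ∈ s, β j) *
              Real.log ((∑ j ∈ s, α j) / (∑ j ∈ s, β j)) := by
            have := f_subadd (hα i) (hβ i) hsa hsb
            convert this using 3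
        _ ≤ _ := by linarith

theorem dissipation_jensen {I : Type*} [Countable I] (α β : I → ℝ)
    (hα : ∀ i, 0 < α i) (hβ : ∀ i, 0 < β i)
    (hαs : Summable α) (hβs : Summable β) (A B : ℝ)
    (hA : A = ∑' i, α i) (hB : B = ∑' i, β i) :
    ENNReal.ofReal ((B - A) * Real.log (B / A)) ≤
      ∑' i, ENNReal.ofReal ((α i - β i) * Real.log (α i / β i)) := by
  rcases isEmpty_or_nonempty I with hI | hI
  · have hA0 : A = 0 := by simp [hA, tsum_empty]
    have hB0 : B = 0 := by simp [hB, tsum_empty]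
    simp [hA0, hB0]
  have hApos : 0 < A := hA ▸ Summable.tsum_pos hαs (fun i => (hα i).le) (Classical.arbitrary I) (hα _)
  have hBpos : 0 < B := hB ▸ Summable.tsum_pos hβs (fun i => (hβ i).le) (Classical.arbitrary I) (hβ _)
  have hflip : (B - A) * Real.log (B / A) = (A - B) * Real.log (A / B) := by
    rw [show Real.log (B / A) = - Real.log (A / B) by
      rw [Real.log_div hBpos.ne' hApos.ne', Real.log_div hApos.ne' hBpos.ne']; ring]
    ring
  rw [hflip]
  have h1 : Tendsto (fun s : Finset I => ∑ i ∈ s, α i) atTop (𝓝 A) := hA ▸ hαs.hasSum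
  have h2 : Tendsto (fun s : Finset I => ∑ i ∈ s, β i) atTop (𝓝 B) := hB ▸ hβs.hasSum
  have htend : Tendsto (fun s : Finset I =>
      (∑ i ∈ s, α i - ∑ i ∈ s, β i) * Real.log ((∑ i ∈ s, α i) / (∑ i ∈ s, β i)))
      atTop (𝓝 ((A - B) * Real.log (A / B))) := by
    exact (h1.sub h2).mul
      (((Real.continuousAt_log (div_ne_zero hApos.ne' hBpos.ne')).tendsto).comp
        (h1.div h2 hBpos.ne'))
  have htend2 : Tendsto (fun s : Finset I => ENNReal.ofReal
      ((∑ i ∈ s, α i - ∑ i ∈ s, β i) * Real.log ((∑ i ∈ s, α i) / (∑ i ∈ s, β i))))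
      atTop (𝓝 (ENNReal.ofReal ((A - B) * Real.log (A / B)))) :=
    (ENNReal.continuous_ofReal.tendsto _).comp htend
  refine le_of_tendsto htend2 (Filter.Eventually.of_forall fun s => ?_)
  calc ENNReal.ofReal ((∑ i ∈ s, α i - ∑ i ∈ s, β i) *
        Real.log ((∑ i ∈ s, α i) / (∑ i ∈ s, β i)))
      ≤ ENNReal.ofReal (∑ i ∈ s, (α i - β i) * Real.log (α i / β i)) :=
        ENNReal.ofReal_le_ofReal (finset_key α β hα hβ s)
    _ = ∑ i ∈ s, ENNReal.ofReal ((α i - β i) * Real.log (α i / β i)) :=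
        ENNReal.ofReal_sum_of_nonneg fun i _ => f_nonneg (hα i) (hβ i)
    _ ≤ _ := ENNReal.sum_le_tsum s
end

section
/- For real numbers u and h with 1 + u > 0 and 1 + h > 0, the inequality (u − h)·log((1+u)/(1+h)) ≥ (u − h)² / max{1+u, 1+h} holds. -/
/-! Multiply `log x ≥ 1 - 1/x` at `x = a / b ≥ 1` by `a - b ≥ 0`; both sides are symmetric in
`a` and `b`, so the case `a < b` follows by swapping. -/

open Real

lemma sq_sub_div_le_sub_mul_log_div {a b : ℝ} (hb : 0 < b) (hba : b ≤ a) :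
    (a - b) ^ 2 / a ≤ (a - b) * log (a / b) := by
  have ha : 0 < a := hb.trans_le hba
  calc (a - b) ^ 2 / a = (a - b) * (1 - (a / b)⁻¹) := by field_simp
    _ ≤ (a - b) * log (a / b) :=
      mul_le_mul_of_nonneg_left (one_sub_inv_le_log_of_pos (div_pos ha hb)) (sub_nonneg.2 hba)

lemma sq_sub_div_max_le_sub_mul_log_div {a b : ℝ} (ha : 0 < a) (hb : 0 < b) :
    (a - b) ^ 2 / max a b ≤ (a - b) * log (a / b) := by
  wlog hba : b ≤ a generalizing a b
  · have hswap : (b - a) * log (b / a) = (a - b) * log (a / b) := by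
      rw [log_div hb.ne' ha.ne', log_div ha.ne' hb.ne']; ring
    have hba' := this hb ha (le_of_not_ge hba)
    rwa [hswap, max_comm, ← neg_sub a b, neg_sq] at hba'
  rw [max_eq_left hba]
  exact sq_sub_div_le_sub_mul_log_div hb hba

theorem log_ratio_quadratic_bound (u h : ℝ) (hu : 0 < 1 + u) (hh : 0 < 1 + h) :
    (u - h) * Real.log ((1 + u) / (1 + h)) ≥ (u - h) ^ 2 / max (1 + u) (1 + h) := by
  simpa only [add_sub_add_left_eq_sub] using sq_sub_div_max_le_sub_mul_log_div hu hh
end
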